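/- For every odd prime p and every k ∈ ZMod p with k ≠ 0, the representation ρ_k of the Heisenberg group H_p on ℂ^{ZMod p} is irreducible: the only subspaces of ℂ^{ZMod p} invariant under ρ_k(g) for all g ∈ H_p are the zero subspace and the whole space. -/

import Mathlib

/-! Write `ψ v = ω^v` (`ZMod.stdAddChar`). The elements `(0, y, 0)` act diagonally, by the
characters `a ↦ ψ (k y a)`, which are pairwise distinct when `k` is a unit. By orthogonality of
characters, averaging `ρ_k(0, y, 0) v` against `ψ (-k y a₀)` projects `v` onto the coordinate
line at `a₀`. So a nonzero invariant subspace contains a basis vector `e_{a₀}`, and the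
translations `ρ_k(x, 0, 0)` carry it to every `e_b`. -/

@[ext]
structure Heis (p : ℕ) where
  x : ZMod p
  y : ZMod p
  z : ZMod p

namespace Heis

variable {p : ℕ}

instance : Mul (Heis p) := ⟨fun a b => ⟨a.x + b.x, a.y + b.y, a.z + b.z + a.x * b.y⟩⟩
instance : One (Heis p) := ⟨⟨0, 0, 0⟩⟩
instance : Inv (Heis p) := ⟨fun a => ⟨-a.x, -a.y, a.x * a.y - a.z⟩⟩

lemma mul_def (a b : Heis p) :
    a * b = ⟨a.x + b.x, a.y + b.y, a.z + b.z + a.x * b.y⟩ := rfl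
lemma one_def : (1 : Heis p) = ⟨0, 0, 0⟩ := rfl
lemma inv_def (a : Heis p) : a⁻¹ = ⟨-a.x, -a.y, a.x * a.y - a.z⟩ := rfl

instance instGroup : Group (Heis p) where
  mul_assoc a b c := by ext <;> simp [mul_def] <;> ring
  one_mul a := by ext <;> simp [mul_def, one_def]
  mul_one a := by ext <;> simp [mul_def, one_def]
  inv_mul_cancel a := by ext <;> simp [mul_def, inv_def, one_def]

end Heis

/-- `ω^v = exp(2πi·v.val/p)` for `v : ZMod p`, where `ω = exp(2πi/p)`. -/
noncomputable def omegaPow (p : ℕ) (v : ZMod p) : ℂ :=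
  Complex.exp (2 * Real.pi * Complex.I * (v.val : ℂ) / p)

/-- The degree-`p` representation `ρ_k` of `H_p` (`k ≠ 0`), as a matrix-valued function:
the `(a,b)` entry of `ρ_k(x,y,z)` is `ω^{k(z+ya)}` if `b = a + x`, and `0` otherwise. -/
noncomputable def rho (p : ℕ) (k : ZMod p) (g : Heis p) :
    Matrix (ZMod p) (ZMod p) ℂ :=
  Matrix.of fun a b => if b = a + g.x then omegaPow p (k * (g.z + g.y * a)) else 0

open ZMod

section

variable {N : ℕ} [NeZero N]

lemma omegaPow_eq_stdAddChar (v : ZMod N) : omegaPow N v = stdAddChar v := by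
  rw [stdAddChar_apply, toCircle_apply, omegaPow]

lemma rho_mulVec_apply (k : ZMod N) (g : Heis N) (u : ZMod N → ℂ) (a : ZMod N) :
    (rho N k g).mulVec u a = stdAddChar (k * (g.z + g.y * a)) * u (a + g.x) := by
  simp [rho, omegaPow_eq_stdAddChar, Matrix.mulVec, dotProduct, ite_mul, Finset.sum_ite_eq']

lemma sum_smul_rho_mulVec_eq_single {k : ZMod N} (hk : IsUnit k) (v : ZMod N → ℂ)
    (a₀ : ZMod N) :
    ∑ y : ZMod N, stdAddChar (-(k * y * a₀)) • (rho N k ⟨0, y, 0⟩).mulVec v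
      = Pi.single a₀ (N * v a₀) := by
  classical
  ext a
  have hterm (y : ZMod N) : stdAddChar (-(k * y * a₀)) * (rho N k ⟨0, y, 0⟩).mulVec v a
      = stdAddChar (y * (k * (a - a₀))) * v a := by
    rw [rho_mulVec_apply, ← mul_assoc, ← AddChar.map_add_eq_mul]
    simp only [zero_add, add_zero]
    ring_nf
  simp only [Finset.sum_apply, Pi.smul_apply, smul_eq_mul, hterm, ← Finset.sum_mul,
    AddChar.sum_mulShift _ (isPrimitive_stdAddChar N), hk.mul_right_eq_zero, sub_eq_zero,
    ZMod.card, Pi.single_apply]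
  split_ifs with h
  · rw [h]
  · rw [Nat.cast_zero, zero_mul]

lemma rho_mulVec_single (k a b : ZMod N) (c : ℂ) :
    (rho N k ⟨a - b, 0, 0⟩).mulVec (Pi.single a c) = Pi.single b c := by
  classical
  ext x
  have hshift : x + (a - b) = a ↔ x = b := by
    rw [add_sub_left_comm, add_eq_left, sub_eq_zero]
  simp [rho_mulVec_apply, Pi.single_apply, hshift]

lemma single_mem_of_rho_invariant {k : ZMod N} {W : Submodule ℂ (ZMod N → ℂ)} (hk : IsUnit k)
    (hW : ∀ g : Heis N, ∀ v ∈ W, (rho N k g).mulVec v ∈ W) {v : ZMod N → ℂ} (hv : v ∈ W)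
    {a₀ : ZMod N} (ha₀ : v a₀ ≠ 0) (b : ZMod N) : Pi.single b 1 ∈ W := by
  have hproj : Pi.single a₀ (N * v a₀) ∈ W := by
    rw [← sum_smul_rho_mulVec_eq_single hk]
    exact W.sum_mem fun y _ => W.smul_mem _ (hW _ v hv)
  have hunit : Pi.single a₀ 1 ∈ W := by
    have hc : (N * v a₀ : ℂ) ≠ 0 := mul_ne_zero (Nat.cast_ne_zero.2 (NeZero.ne N)) ha₀
    simpa only [← Pi.single_smul', smul_eq_mul, inv_mul_cancel₀ hc] using
      W.smul_mem (N * v a₀)⁻¹ hproj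
  rw [← rho_mulVec_single k a₀ b]
  exact hW _ _ hunit

theorem rho_invariant_eq_bot_or_eq_top {k : ZMod N} {W : Submodule ℂ (ZMod N → ℂ)}
    (hk : IsUnit k) (hW : ∀ g : Heis N, ∀ v ∈ W, (rho N k g).mulVec v ∈ W) : W = ⊥ ∨ W = ⊤ := by
  refine or_iff_not_imp_left.2 fun hW0 => ?_
  obtain ⟨v, hv, hv0⟩ := W.ne_bot_iff.1 hW0
  obtain ⟨a₀, ha₀⟩ := Function.ne_iff.1 hv0
  rw [eq_top_iff, ← (Pi.basisFun ℂ (ZMod N)).span_eq, Submodule.span_le]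
  rintro _ ⟨b, rfl⟩
  rw [Pi.basisFun_apply]
  exact single_mem_of_rho_invariant hk hW hv ha₀ b

end

theorem heisenberg_rho_irreducible (p : ℕ) [NeZero p] (hp : p.Prime)
    (k : ZMod p) (hk : k ≠ 0) (W : Submodule ℂ (ZMod p → ℂ))
    (hW : ∀ g : Heis p, ∀ v ∈ W, (rho p k g).mulVec v ∈ W) :
    W = ⊥ ∨ W = ⊤ :=
  haveI : Fact p.Prime := ⟨hp⟩
  rho_invariant_eq_bot_or_eq_top hk.isUnit hW
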